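/- Contribution of terms with shared prime factor: for 1 ≤ h < n ≤ N, Σ_{χ even mod t^{N-h}} Σ_{h < x ≤ n} |Σ_{P ∈ P_x} χ(P)² Σ_{M ∈ M_{n-2x}} b_{MP} χ(M)|² ≪ (n/h²) q^{N+n-h}, for any coefficients b_{MP} with |b_{MP}| ≤ 1. -/

import Mathlib

open Polynomial Finset Filter
open scoped Classical

/-- The set of monic polynomials of degree `n` over `Fq`. -/
noncomputable def Mn (Fq : Type) [Field Fq] [Fintype Fq] (n : ℕ) : Finset (Polynomial Fq) :=
  (Finset.univ : Finset (Fin n → Fq)).image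
    (fun c => Polynomial.X ^ n + ∑ i : Fin n, Polynomial.C (c i) * Polynomial.X ^ (i : ℕ))

/-- The set of monic irreducible polynomials of degree `x` over `Fq`. -/
noncomputable def Px (Fq : Type) [Field Fq] [Fintype Fq] (x : ℕ) : Finset (Polynomial Fq) :=
  (Mn Fq x).filter Irreducible

/-- `Mn` extended to integer degrees: empty for negative degree. -/
noncomputable def MnInt (Fq : Type) [Field Fq] [Fintype Fq] (m : ℤ) : Finset (Polynomial Fq) :=
  if 0 ≤ m then Mn Fq m.toNat else ∅

/-- The Liouville function on `Fq[t]`: `(-1)` to the number of irreducible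
factors counted with multiplicity. -/
noncomputable def liouville {Fq : Type} [Field Fq] [Fintype Fq] (G : Polynomial Fq) : ℤ :=
  (-1) ^ Multiset.card (UniqueFactorizationMonoid.factors G)

/-- The residue ring `Fq[t]/(Q)`. -/
abbrev RQ (Fq : Type) [Field Fq] [Fintype Fq] (Q : Polynomial Fq) :=
  Polynomial Fq ⧸ Ideal.span {Q}

/-- Value of a Dirichlet character mod `Q` at a polynomial. -/
noncomputable def chpoly {Fq : Type} [Field Fq] [Fintype Fq] {Q : Polynomial Fq}
    (χ : MulChar (RQ Fq Q) ℂ) (G : Polynomial Fq) : ℂ :=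
  χ (Ideal.Quotient.mk (Ideal.span {Q}) G)

/-- A Dirichlet character is even if it is invariant under multiplication by
nonzero constants. -/
noncomputable def IsEvenChar {Fq : Type} [Field Fq] [Fintype Fq] {Q : Polynomial Fq}
    (χ : MulChar (RQ Fq Q) ℂ) : Prop :=
  ∀ (c : Fqˣ) (G : Polynomial Fq), chpoly χ (Polynomial.C (c : Fq) * G) = chpoly χ G

/-- Euler's function for polynomial moduli: `φ(Q) = |(Fq[t]/Q)ˣ|`. -/
noncomputable def phi (Fq : Type) [Field Fq] [Fintype Fq] (Q : Polynomial Fq) : ℕ :=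
  Nat.card (Polynomial Fq ⧸ Ideal.span {Q})ˣ

/-- A polynomial is `h`-smooth if all of its irreducible factors have degree at most `h`. -/
def IsSmooth {Fq : Type} [Field Fq] [Fintype Fq] (h : ℕ) (G : Polynomial Fq) : Prop :=
  ∀ P : Polynomial Fq, Irreducible P → P ∣ G → P.natDegree ≤ h

/-- The von Mangoldt function on `Fq[t]`: `Λ(P^k) = deg P` for `P` monic
irreducible and `k ≥ 1`, and `Λ = 0` otherwise. -/
noncomputable def Lam {Fq : Type} [Field Fq] [Fintype Fq] (G : Polynomial Fq) : ℕ :=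
  if hG : ∃ P : Polynomial Fq, P.Monic ∧ Irreducible P ∧ ∃ k, 1 ≤ k ∧ G = P ^ k
  then hG.choose.natDegree else 0

/-- `ω_{[h,n]}(M)`: number of distinct monic irreducible divisors of `M` of degree in `[h,n]`. -/
noncomputable def omegaIcc {Fq : Type} [Field Fq] [Fintype Fq] (h n : ℕ) (M : Polynomial Fq) : ℕ :=
  (((Finset.Icc h n).biUnion (Px Fq)).filter (· ∣ M)).card

/-- `ω_{(h,n]}(M)`: number of distinct monic irreducible divisors of `M` of degree in `(h,n]`. -/
noncomputable def omegaIoc {Fq : Type} [Field Fq] [Fintype Fq] (h n : ℕ) (M : Polynomial Fq) : ℕ :=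
  (((Finset.Ioc h n).biUnion (Px Fq)).filter (· ∣ M)).card

/-- The polynomials of degree at most `h`. -/
noncomputable def Dle (Fq : Type) [Field Fq] [Fintype Fq] (h : ℕ) : Finset (Polynomial Fq) :=
  (Finset.univ : Finset (Fin (h + 1) → Fq)).image
    (fun c => ∑ i : Fin (h + 1), Polynomial.C (c i) * Polynomial.X ^ (i : ℕ))

/-- The short interval of length `h` about `G₀`: all `G` with `deg (G - G₀) ≤ h`. -/
noncomputable def Ih {Fq : Type} [Field Fq] [Fintype Fq] (h : ℕ) (G₀ : Polynomial Fq) :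
    Finset (Polynomial Fq) :=
  (Dle Fq h).image (fun E => G₀ + E)

/-!
Drop the evenness condition and fix the degree `x` of `P`. With `d = N - h`, the inner sum is
`∑ χ(P ^ 2 * M) b M P` over pairs `(P, M)`; grouping the pairs by the class `r` of `P ^ 2 * M`
mod `X ^ d`, orthogonality of the characters bounds its mean square by `q ^ d ∑_r |A r| ^ 2`, where
`A r` is the total weight of the pairs in class `r`. A class contains at most `q ^ (n - d)` monic
polynomials of degree `n`, each of the form `P ^ 2 * M` for at most `n / x` primes `P` of degree
`x`; hence `|A r| ≤ (n / x) q ^ (n - d)`, while `∑_r |A r| ≤ π(x) q ^ (n - 2x) ≤ q ^ (n - x) / x`.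
Degree `x` thus contributes at most `(n / x²) q ^ (N + n - x)`, and summing the geometric series
over `h < x ≤ n` gives the bound.
-/

theorem Nat.sum_Ioc_pow_sub_lt {q : ℕ} (hq : 2 ≤ q) (h : ℕ) {n m : ℕ} (hnm : n ≤ m) :
    ∑ x ∈ Ioc h n, q ^ (m - x) < q ^ (m - h) := by
  rw [← sum_image (f := fun k ↦ q ^ k) fun x hx y hy hxy ↦ by
    have := mem_Ioc.mp hx; have := mem_Ioc.mp hy; omega]
  refine Nat.geomSum_lt hq fun k hk ↦ ?_
  obtain ⟨x, hx, rfl⟩ := mem_image.mp hk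
  have := mem_Ioc.mp hx
  omega

namespace MulChar

variable {R : Type*} [CommRing R] [Fintype R]

instance hasEnoughRootsOfUnity_complex_exponent_units :
    HasEnoughRootsOfUnity ℂ (Monoid.exponent Rˣ) :=
  have : NeZero (Monoid.exponent Rˣ) := ⟨Monoid.exponent_ne_zero_of_finite⟩
  inferInstance

variable [Fintype (MulChar R ℂ)]

theorem sum_apply_eq_ite (a : R) :
    ∑ χ : MulChar R ℂ, χ a = if a = 1 then (Fintype.card (MulChar R ℂ) : ℂ) else 0 := by
  split_ifs with ha
  · simp [ha]
  · obtain ⟨χ, hχ⟩ := exists_apply_ne_one_of_hasEnoughRootsOfUnity R ℂ ha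
    refine eq_zero_of_mul_eq_self_left hχ ?_
    simp only [Finset.mul_sum, ← MulChar.mul_apply]
    exact Fintype.sum_bijective _ (Group.mulLeft_bijective χ) _ _ fun _ ↦ rfl

theorem sum_apply_mul_star_apply (a b : R) :
    ∑ χ : MulChar R ℂ, χ a * star (χ b) =
      if a = b ∧ IsUnit b then (Fintype.card (MulChar R ℂ) : ℂ) else 0 := by
  simp only [star_apply', inv_apply, ← map_mul, sum_apply_eq_ite]
  congr 1
  by_cases hb : IsUnit b
  · obtain ⟨u, rfl⟩ := hb
    simp [Units.mul_inv_eq_one]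
  · simp only [Ring.inverse_non_unit b hb, mul_zero, hb, and_false, eq_iff_iff, iff_false]
    exact fun h ↦ hb ((subsingleton_of_zero_eq_one h).elim 1 b ▸ isUnit_one)

theorem sum_norm_sq_sum_mul_apply (A : R → ℂ) :
    ∑ χ : MulChar R ℂ, ‖∑ r, A r * χ r‖ ^ 2 =
      Fintype.card (MulChar R ℂ) * ∑ r with IsUnit r, ‖A r‖ ^ 2 := by
  apply Complex.ofReal_injective
  push_cast
  simp only [← Complex.mul_conj', ← Complex.star_def]
  calc ∑ χ : MulChar R ℂ, (∑ r, A r * χ r) * star (∑ s, A s * χ s)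
      = ∑ r, ∑ s, A r * star (A s) * ∑ χ : MulChar R ℂ, χ r * star (χ s) := by
        simp only [star_sum, star_mul', sum_mul_sum]
        rw [sum_comm]
        refine sum_congr rfl fun r _ ↦ ?_
        rw [sum_comm]
        refine sum_congr rfl fun s _ ↦ ?_
        rw [mul_sum]
        exact sum_congr rfl fun χ _ ↦ by ring
    _ = _ := by
        simp only [sum_apply_mul_star_apply, ite_and, mul_ite, mul_zero, sum_ite_eq,
          mem_univ, if_true, sum_filter, mul_sum]
        exact sum_congr rfl fun s _ ↦ by split_ifs <;> ring

theorem card_le_card_domain : Fintype.card (MulChar R ℂ) ≤ Fintype.card R := by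
  simp only [← Nat.card_eq_fintype_card, card_eq_card_units_of_hasEnoughRootsOfUnity R ℂ]
  exact Nat.card_le_card_of_injective _ Units.val_injective

theorem sum_norm_sq_sum_le_of_card_fiber_le {ι : Type*} (T : Finset ι) (g : ι → R) (w : ι → ℂ)
    (hw : ∀ i ∈ T, ‖w i‖ ≤ 1) {K : ℕ} (hK : ∀ r, #{i ∈ T | g i = r} ≤ K) :
    ∑ χ : MulChar R ℂ, ‖∑ i ∈ T, w i * χ (g i)‖ ^ 2 ≤ Fintype.card R * K * #T := by
  set A : R → ℂ := fun r ↦ ∑ i ∈ T with g i = r, w i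
  have hsum (χ : MulChar R ℂ) : ∑ i ∈ T, w i * χ (g i) = ∑ r, A r * χ r := by
    rw [← sum_fiberwise T g]
    refine sum_congr rfl fun r _ ↦ ?_
    rw [sum_mul]
    exact sum_congr rfl fun i hi ↦ by rw [(mem_filter.mp hi).2]
  have hA (r : R) : ‖A r‖ ≤ #{i ∈ T | g i = r} :=
    (norm_sum_le _ _).trans <| by
      simpa using sum_le_card_nsmul _ _ 1 fun i hi ↦ hw i (mem_filter.mp hi).1
  have hK' (r : R) : ‖A r‖ ≤ K := (hA r).trans (mod_cast hK r)
  simp only [hsum, sum_norm_sq_sum_mul_apply]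
  calc _ ≤ (Fintype.card R : ℝ) * ∑ r, ‖A r‖ ^ 2 := by
        gcongr
        · exact_mod_cast card_le_card_domain
        · exact filter_subset _ _
    _ ≤ Fintype.card R * ∑ r, (K * #{i ∈ T | g i = r} : ℝ) := by
        gcongr with r
        rw [sq]
        exact mul_le_mul (hK' r) (hA r) (norm_nonneg _) (Nat.cast_nonneg _)
    _ = Fintype.card R * K * #T := by
        rw [← mul_sum, card_eq_sum_card_fiberwise fun i _ ↦ mem_univ (g i)]
        push_cast
        ring

end MulChar

section PolynomialCounting

variable {Fq : Type} [Field Fq] [Fintype Fq]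

theorem mem_Mn {n : ℕ} {G : Fq[X]} : G ∈ Mn Fq n ↔ G.Monic ∧ G.natDegree = n := by
  constructor
  · intro hG
    obtain ⟨c, -, rfl⟩ := mem_image.mp hG
    have hlt : degree (∑ i : Fin n, C (c i) * X ^ (i : ℕ)) < degree ((X : Fq[X]) ^ n) := by
      simpa using degree_sum_fin_lt c
    exact ⟨monic_X_pow_add (degree_sum_fin_lt c),
      (natDegree_add_eq_left_of_degree_lt hlt).trans (natDegree_X_pow n)⟩
  · rintro ⟨hG, rfl⟩
    refine mem_image.mpr ⟨fun i ↦ G.coeff i, mem_univ _, ?_⟩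
    conv_rhs => rw [hG.as_sum]
    rw [Fin.sum_univ_eq_sum_range (fun i ↦ C (G.coeff i) * X ^ i)]

theorem card_Mn_le (n : ℕ) : #(Mn Fq n) ≤ Fintype.card Fq ^ n :=
  card_image_le.trans (by simp)

theorem mem_Px {x : ℕ} {P : Fq[X]} : P ∈ Px Fq x ↔ P.Monic ∧ Irreducible P ∧ P.natDegree = x := by
  rw [Px, mem_filter, mem_Mn]
  tauto

theorem card_filter_Px_dvd_mul_le {x : ℕ} {G : Fq[X]} (hG : G ≠ 0) :
    #{P ∈ Px Fq x | P ∣ G} * x ≤ G.natDegree := by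
  set S := {P ∈ Px Fq x | P ∣ G}
  have hS (P) (hP : P ∈ S) : P.Monic ∧ Irreducible P ∧ P.natDegree = x :=
    mem_Px.mp (mem_filter.mp hP).1
  have hcop : (S : Set Fq[X]).Pairwise (Function.onFun IsCoprime id) := by
    intro P hP Q hQ hne
    obtain ⟨hPm, hPi, -⟩ := hS P hP
    obtain ⟨hQm, hQi, -⟩ := hS Q hQ
    refine (hPi.coprime_iff_not_dvd).mpr fun hPQ ↦ hne ?_
    exact eq_of_monic_of_associated hPm hQm (hPi.associated_of_dvd hQi hPQ)
  have hdvd : ∏ P ∈ S, P ∣ G := prod_dvd_of_coprime hcop fun P hP ↦ (mem_filter.mp hP).2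
  have hdeg : (∏ P ∈ S, P).natDegree = #S * x := by
    rw [natDegree_prod _ _ fun P hP ↦ (hS P hP).1.ne_zero, sum_congr rfl fun P hP ↦ (hS P hP).2.2,
      sum_const, smul_eq_mul]
  exact hdeg ▸ natDegree_le_of_dvd hdvd hG

-- Every monic irreducible of degree `x` divides `X ^ q ^ x - X`, which has degree `q ^ x`.
theorem card_Px_mul_le (x : ℕ) : #(Px Fq x) * x ≤ Fintype.card Fq ^ x := by
  rcases Nat.eq_zero_or_pos x with rfl | hx
  · simp
  have hq : 1 < Fintype.card Fq := Fintype.one_lt_card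
  have hW := FiniteField.X_pow_card_pow_sub_X_ne_zero Fq hx.ne' hq
  have key := card_filter_Px_dvd_mul_le (x := x) hW
  rw [FiniteField.X_pow_card_pow_sub_X_natDegree_eq Fq hx.ne' hq, filter_true_of_mem] at key
  · exact key
  intro P hP
  obtain ⟨-, hirr, rfl⟩ := mem_Px.mp hP
  rw [← Nat.card_eq_fintype_card]
  exact hirr.natDegree_dvd_iff_dvd_X_pow_card_pow_sub_X.mp dvd_rfl

theorem card_filter_Mn_mk_eq_le (d n : ℕ) (r : RQ Fq (X ^ d)) :
    #{G ∈ Mn Fq n | Ideal.Quotient.mk _ G = r} ≤ Fintype.card Fq ^ (n - d) := by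
  calc _ ≤ #(univ : Finset (Fin (n - d) → Fq)) := by
        refine card_le_card_of_injOn (fun G i ↦ G.coeff (d + i)) (fun _ _ ↦ mem_univ _) ?_
        intro G hG G' hG' hcoeff
        obtain ⟨hGn, hGr⟩ := mem_filter.mp hG
        obtain ⟨hG'n, hG'r⟩ := mem_filter.mp hG'
        obtain ⟨hGm, hGdeg⟩ := mem_Mn.mp hGn
        obtain ⟨hG'm, hG'deg⟩ := mem_Mn.mp hG'n
        have hdvd : X ^ d ∣ G - G' :=
          Ideal.mem_span_singleton.mp (Ideal.Quotient.eq.mp (hGr.trans hG'r.symm))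
        ext k
        rcases lt_or_ge k d with hkd | hdk
        · exact sub_eq_zero.mp (by simpa using X_pow_dvd_iff.mp hdvd k hkd)
        rcases lt_trichotomy k n with hkn | rfl | hnk
        · simpa [Nat.add_sub_cancel' hdk] using congrFun hcoeff ⟨k - d, by omega⟩
        · rw [← hGdeg, hGm.coeff_natDegree, hGdeg, ← hG'deg, hG'm.coeff_natDegree]
        · rw [coeff_eq_zero_of_natDegree_lt (hGdeg ▸ hnk),
            coeff_eq_zero_of_natDegree_lt (hG'deg ▸ hnk)]
    _ = Fintype.card Fq ^ (n - d) := by simp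

end PolynomialCounting

section CharacterSums

variable {Fq : Type} [Field Fq] [Fintype Fq]

theorem finite_RQ {Q : Fq[X]} (hQ : Q ≠ 0) : Finite (RQ Fq Q) :=
  have : Module.Finite Fq (RQ Fq Q) := (AdjoinRoot.powerBasis hQ).finite
  Module.finite_of_finite Fq

theorem natCard_RQ {Q : Fq[X]} (hQ : Q ≠ 0) :
    Nat.card (RQ Fq Q) = Fintype.card Fq ^ Q.natDegree := by
  have : Module.Finite Fq (RQ Fq Q) := (AdjoinRoot.powerBasis hQ).finite
  rw [Module.natCard_eq_pow_finrank (K := Fq), finrank_quotient_span_eq_natDegree,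
    Nat.card_eq_fintype_card]

instance (d : ℕ) : Finite (RQ Fq (X ^ d)) := finite_RQ (pow_ne_zero d X_ne_zero)

theorem sq_mul_mem_Mn {x m : ℕ} {P M : Fq[X]} (hP : P ∈ Px Fq x) (hM : M ∈ Mn Fq m) :
    P ^ 2 * M ∈ Mn Fq (2 * x + m) := by
  obtain ⟨hPm, -, rfl⟩ := mem_Px.mp hP
  obtain ⟨hMm, rfl⟩ := mem_Mn.mp hM
  exact mem_Mn.mpr ⟨(hPm.pow 2).mul hMm, by rw [(hPm.pow 2).natDegree_mul hMm, natDegree_pow]⟩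

theorem card_filter_sq_mul_eq_mul_le {x : ℕ} (S : Finset Fq[X]) {G : Fq[X]} (hG : G ≠ 0) :
    #{p ∈ Px Fq x ×ˢ S | p.1 ^ 2 * p.2 = G} * x ≤ G.natDegree := by
  refine le_trans (Nat.mul_le_mul_right x ?_) (card_filter_Px_dvd_mul_le hG)
  refine card_le_card_of_injOn Prod.fst (fun p hp ↦ ?_) fun p hp p' hp' hpp' ↦ ?_
  · obtain ⟨hpT, rfl⟩ := mem_filter.mp hp
    exact mem_filter.mpr ⟨(mem_product.mp hpT).1, Dvd.intro (p.1 * p.2) (by ring)⟩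
  · obtain ⟨hpT, hpG⟩ := mem_filter.mp hp
    obtain ⟨-, hp'G⟩ := mem_filter.mp hp'
    have hP : p.1 ^ 2 ≠ 0 := pow_ne_zero 2 (mem_Px.mp (mem_product.mp hpT).1).1.ne_zero
    refine Prod.ext hpp' (mul_left_cancel₀ hP ?_)
    rw [hpG, show p.1 = p'.1 from hpp', hp'G]

theorem card_filter_mk_sq_mul_eq_le (d : ℕ) {n x : ℕ} (hx : 0 < x) (h2x : 2 * x ≤ n)
    (r : RQ Fq (X ^ d)) :
    #{p ∈ Px Fq x ×ˢ Mn Fq (n - 2 * x) | Ideal.Quotient.mk _ (p.1 ^ 2 * p.2) = r} ≤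
      n / x * Fintype.card Fq ^ (n - d) := by
  set F := {p ∈ Px Fq x ×ˢ Mn Fq (n - 2 * x) | Ideal.Quotient.mk _ (p.1 ^ 2 * p.2) = r}
  have hmem : ∀ p ∈ F, p.1 ^ 2 * p.2 ∈ {G ∈ Mn Fq n | Ideal.Quotient.mk _ G = r} := by
    intro p hp
    obtain ⟨hpT, hpr⟩ := mem_filter.mp hp
    obtain ⟨hP, hM⟩ := mem_product.mp hpT
    have := sq_mul_mem_Mn hP hM
    rw [show 2 * x + (n - 2 * x) = n by omega] at this
    exact mem_filter.mpr ⟨this, hpr⟩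
  have himage := image_subset_iff.mpr hmem
  calc #F ≤ n / x * #(F.image fun p ↦ p.1 ^ 2 * p.2) := by
        refine card_le_mul_card_image F _ fun G hG ↦ ?_
        obtain ⟨hGm, hGn⟩ := mem_Mn.mp (mem_filter.mp (himage hG)).1
        rw [Nat.le_div_iff_mul_le hx, ← hGn]
        refine le_trans (Nat.mul_le_mul_right x (card_le_card ?_))
          (card_filter_sq_mul_eq_mul_le (Mn Fq (n - 2 * x)) hGm.ne_zero)
        exact filter_subset_filter _ (filter_subset _ _)
    _ ≤ n / x * Fintype.card Fq ^ (n - d) :=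
        Nat.mul_le_mul_left _ ((card_le_card himage).trans (card_filter_Mn_mk_eq_le d n r))

theorem sum_norm_sq_sum_Px_le (d : ℕ) {n x : ℕ} (hx : 0 < x) (h2x : 2 * x ≤ n)
    [Fintype (MulChar (RQ Fq (X ^ d)) ℂ)] (b : Fq[X] → Fq[X] → ℂ) (hb : ∀ M P, ‖b M P‖ ≤ 1) :
    ∑ χ : MulChar (RQ Fq (X ^ d)) ℂ,
        ‖∑ P ∈ Px Fq x, chpoly χ P ^ 2 * ∑ M ∈ Mn Fq (n - 2 * x), b M P * chpoly χ M‖ ^ 2 ≤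
      ((Fintype.card Fq ^ d * (n / x * Fintype.card Fq ^ (n - d)) *
        (#(Px Fq x) * Fintype.card Fq ^ (n - 2 * x)) : ℕ) : ℝ) := by
  let _ := Fintype.ofFinite (RQ Fq (X ^ d))
  have hsum (χ : MulChar (RQ Fq (X ^ d)) ℂ) :
      ∑ P ∈ Px Fq x, chpoly χ P ^ 2 * ∑ M ∈ Mn Fq (n - 2 * x), b M P * chpoly χ M =
        ∑ p ∈ Px Fq x ×ˢ Mn Fq (n - 2 * x),
          b p.2 p.1 * χ (Ideal.Quotient.mk _ (p.1 ^ 2 * p.2)) := by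
    rw [sum_product]
    refine sum_congr rfl fun P _ ↦ ?_
    rw [mul_sum]
    refine sum_congr rfl fun M _ ↦ ?_
    simp only [chpoly, map_mul, map_pow]
    ring
  have hcard : Fintype.card (RQ Fq (X ^ d)) = Fintype.card Fq ^ d := by
    rw [← Nat.card_eq_fintype_card, natCard_RQ (pow_ne_zero d X_ne_zero), natDegree_X_pow]
  simp only [hsum]
  refine (MulChar.sum_norm_sq_sum_le_of_card_fiber_le _ _ _ (fun p _ ↦ hb p.2 p.1)
    (card_filter_mk_sq_mul_eq_le d hx h2x)).trans ?_
  rw [hcard, card_product]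
  exact_mod_cast Nat.mul_le_mul_left _ (Nat.mul_le_mul_left _ (card_Mn_le _))

theorem sum_norm_sq_sum_MnInt_le {d N n h x : ℕ} (hd : d ≤ N) (hnN : n ≤ N) (hh : 0 < h)
    (hhx : h ≤ x) [Fintype (MulChar (RQ Fq (X ^ d)) ℂ)] (b : Fq[X] → Fq[X] → ℂ)
    (hb : ∀ M P, ‖b M P‖ ≤ 1) :
    ∑ χ : MulChar (RQ Fq (X ^ d)) ℂ,
        ‖∑ P ∈ Px Fq x, chpoly χ P ^ 2 *
          ∑ M ∈ MnInt Fq ((n : ℤ) - 2 * (x : ℤ)), b M P * chpoly χ M‖ ^ 2 ≤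
      n / h ^ 2 * (Fintype.card Fq : ℝ) ^ (N + n - x) := by
  set q := Fintype.card Fq
  rcases lt_or_ge n (2 * x) with hn | h2x
  · rw [MnInt, if_neg (by omega)]
    simp only [sum_empty, mul_zero, norm_zero, zero_pow two_ne_zero, sum_const_zero]
    positivity
  rw [MnInt, if_pos (by omega), show ((n : ℤ) - 2 * (x : ℤ)).toNat = n - 2 * x by omega]
  refine (sum_norm_sq_sum_Px_le d (by omega) h2x b hb).trans ?_
  rw [div_mul_eq_mul_div, le_div_iff₀ (by positivity)]
  calc _ ≤ ((q ^ d * (n / x * q ^ (n - d)) * (#(Px Fq x) * q ^ (n - 2 * x)) * (x * x) : ℕ)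
          : ℝ) := by
        rw [sq]
        exact_mod_cast Nat.mul_le_mul_left _ (Nat.mul_le_mul hhx hhx)
    _ = ((q ^ d * q ^ (n - d) * q ^ (n - 2 * x) * (n / x * x * (#(Px Fq x) * x)) : ℕ) : ℝ) := by
        congr 1
        ring
    _ ≤ ((q ^ N * q ^ (n - 2 * x) * (n * q ^ x) : ℕ) : ℝ) := by
        gcongr
        · rw [← pow_add]
          exact Nat.pow_le_pow_right Fintype.card_pos (by omega)
        · exact Nat.div_mul_le_self n x
        · exact card_Px_mul_le x
    _ = n * (q : ℝ) ^ (N + n - x) := by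
        rw [show N + n - x = N + (n - 2 * x) + x by omega]
        push_cast
        ring

end CharacterSums

theorem shared_prime_factor_contribution (Fq : Type) [Field Fq] [Fintype Fq] :
    ∃ C > 0, ∀ N n h : ℕ, 1 ≤ h → h < n → n ≤ N →
      ∀ b : Polynomial Fq → Polynomial Fq → ℂ, (∀ M P, ‖b M P‖ ≤ 1) →
      (∑ᶠ (χ : MulChar (RQ Fq ((Polynomial.X : Polynomial Fq) ^ (N - h))) ℂ)
          (_ : IsEvenChar χ),
        ∑ x ∈ Finset.Ioc h n,
          ‖∑ P ∈ Px Fq x, (chpoly χ P) ^ 2 *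
              ∑ M ∈ MnInt Fq ((n : ℤ) - 2 * (x : ℤ)), b M P * chpoly χ M‖ ^ 2) ≤
      C * ((n : ℝ) / (h : ℝ) ^ 2) * (Fintype.card Fq : ℝ) ^ (N + n - h) := by
  refine ⟨1, one_pos, fun N n h hh _ hnN b hb ↦ ?_⟩
  let _ := Fintype.ofFinite (MulChar (RQ Fq (X ^ (N - h))) ℂ)
  rw [finsum_cond_eq_sum_of_cond_iff _ (t := {χ | IsEvenChar χ}) fun _ ↦ by simp, one_mul]
  refine (sum_le_sum_of_subset_of_nonneg (filter_subset _ univ) fun _ _ _ ↦ by positivity).trans ?_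
  rw [sum_comm]
  refine (sum_le_sum fun x hx ↦ sum_norm_sq_sum_MnInt_le (N.sub_le h) hnN hh (mem_Ioc.mp hx).1.le
    b hb).trans ?_
  rw [← mul_sum]
  gcongr
  exact_mod_cast (Nat.sum_Ioc_pow_sub_lt Fintype.one_lt_card h (by omega)).le
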